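/- arXiv:2112.05083 — 8 statements merged into one kernel-verified Lean document; each statement's English description precedes it below -/
import Mathlib

section
/- Let H be a real inner product space (e.g. ℝ^d), let r ≥ 0, and let z, c₁, c₂, c₃ ∈ H be such that ‖cᵢ − z‖ ≤ r for i = 1, 2, 3. Then at least one of the distances ‖c₁ − c₂‖, ‖c₁ − c₃‖, ‖c₂ − c₃‖ is at most √3 · r. Equivalently, any three points of a closed ball of radius r contain a pair at distance at most √3 · r. -/
/-- Any three points of a closed ball of radius `r` in a real inner product space
contain a pair at distance at most `√3 · r`. -/
theorem three_points_in_ball_close_pair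
    {H : Type*} [NormedAddCommGroup H] [InnerProductSpace ℝ H]
    (r : ℝ) (hr : 0 ≤ r) (z c₁ c₂ c₃ : H)
    (h₁ : ‖c₁ - z‖ ≤ r) (h₂ : ‖c₂ - z‖ ≤ r) (h₃ : ‖c₃ - z‖ ≤ r) :
    ‖c₁ - c₂‖ ≤ Real.sqrt 3 * r ∨ ‖c₁ - c₃‖ ≤ Real.sqrt 3 * r ∨
      ‖c₂ - c₃‖ ≤ Real.sqrt 3 * r := by
  by_contra hcon
  push_neg at hcon
  obtain ⟨H1, H2, H3⟩ := hcon
  set a := c₁ - z with ha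
  set b := c₂ - z with hb
  set c := c₃ - z with hc
  have e1 : c₁ - c₂ = a - b := by rw [ha, hb]; abel
  have e2 : c₁ - c₃ = a - c := by rw [ha, hc]; abel
  have e3 : c₂ - c₃ = b - c := by rw [hb, hc]; abel
  rw [e1] at H1; rw [e2] at H2; rw [e3] at H3
  have sqrt3r_nonneg : 0 ≤ Real.sqrt 3 * r := mul_nonneg (Real.sqrt_nonneg 3) hr
  have sq3 : (Real.sqrt 3) ^ 2 = 3 := Real.sq_sqrt (by norm_num)
  have key : (Real.sqrt 3 * r) ^ 2 = 3 * r ^ 2 := by rw [mul_pow, sq3]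
  have q1 : 3 * r ^ 2 < ‖a - b‖ ^ 2 := key ▸ pow_lt_pow_left₀ H1 sqrt3r_nonneg (by norm_num)
  have q2 : 3 * r ^ 2 < ‖a - c‖ ^ 2 := key ▸ pow_lt_pow_left₀ H2 sqrt3r_nonneg (by norm_num)
  have q3 : 3 * r ^ 2 < ‖b - c‖ ^ 2 := key ▸ pow_lt_pow_left₀ H3 sqrt3r_nonneg (by norm_num)
  have ra : ‖a‖ ^ 2 ≤ r ^ 2 := pow_le_pow_left₀ (norm_nonneg a) h₁ 2
  have rb : ‖b‖ ^ 2 ≤ r ^ 2 := pow_le_pow_left₀ (norm_nonneg b) h₂ 2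
  have rc : ‖c‖ ^ 2 ≤ r ^ 2 := pow_le_pow_left₀ (norm_nonneg c) h₃ 2
  have n1 := @norm_sub_sq_real H _ _ a b
  have n2 := @norm_sub_sq_real H _ _ a c
  have n3 := @norm_sub_sq_real H _ _ b c
  have nab := @norm_add_sq_real H _ _ a b
  have nabc := @norm_add_sq_real H _ _ (a + b) c
  have iadd : inner ℝ (a + b) c = (inner ℝ a c : ℝ) + inner ℝ b c := inner_add_left a b c
  rw [iadd, nab] at nabc
  have pos : (0:ℝ) ≤ ‖a + b + c‖ ^ 2 := sq_nonneg _
  linarith [q1, q2, q3, ra, rb, rc, n1, n2, n3, nabc, pos]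
end

section
/- Let r ≥ 0, let C ⊂ ℝ^d be a set of points such that ‖c − c'‖ > √3 · r for all distinct c, c' ∈ C, and let f ∈ ℝ^d. Then the number of points c ∈ C with ‖c − f‖ ≤ r is at most 2, i.e., |{c ∈ C : ‖c − f‖ ≤ r}| ≤ 2. -/
open scoped RealInnerProductSpace

lemma key_pair {E : Type*} [NormedAddCommGroup E] [InnerProductSpace ℝ E] (u v w : E) :
    -(1/2) * (‖u‖*‖v‖) ≤ ⟪u, v⟫ ∨ -(1/2) * (‖u‖*‖w‖) ≤ ⟪u, w⟫ ∨
    -(1/2) * (‖v‖*‖w‖) ≤ ⟪v, w⟫ := by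
  by_contra h
  push_neg at h
  obtain ⟨h1, h2, h3⟩ := h
  have ha : 0 < ‖u‖ := by
    rcases (norm_nonneg u).lt_or_eq with h | h
    · exact h
    · have : u = 0 := by rwa [eq_comm, norm_eq_zero] at h
      simp [this] at h1
  have hb : 0 < ‖v‖ := by
    rcases (norm_nonneg v).lt_or_eq with h | h
    · exact h
    · have : v = 0 := by rwa [eq_comm, norm_eq_zero] at h
      simp [this] at h1
  have hc : 0 < ‖w‖ := by
    rcases (norm_nonneg w).lt_or_eq with h | h
    · exact h
    · have : w = 0 := by rwa [eq_comm, norm_eq_zero] at h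
      simp [this] at h2
  have hp : (0:ℝ) ≤ ⟪(‖v‖*‖w‖) • u + ((‖u‖*‖w‖) • v + (‖u‖*‖v‖) • w),
      (‖v‖*‖w‖) • u + ((‖u‖*‖w‖) • v + (‖u‖*‖v‖) • w)⟫ := real_inner_self_nonneg
  simp only [inner_add_left, inner_add_right, real_inner_smul_left, real_inner_smul_right,
    real_inner_self_eq_norm_mul_norm] at hp
  have n1 : ‖(‖v‖*‖w‖) • u‖ = (‖v‖*‖w‖) * ‖u‖ := by
    rw [norm_smul, Real.norm_eq_abs, abs_of_nonneg (by positivity)]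
  have n2 : ‖(‖u‖*‖w‖) • v‖ = (‖u‖*‖w‖) * ‖v‖ := by
    rw [norm_smul, Real.norm_eq_abs, abs_of_nonneg (by positivity)]
  have n3 : ‖(‖u‖*‖v‖) • w‖ = (‖u‖*‖v‖) * ‖w‖ := by
    rw [norm_smul, Real.norm_eq_abs, abs_of_nonneg (by positivity)]
  rw [n1, n2, n3] at hp
  have cuv := real_inner_comm u v
  have cuw := real_inner_comm u w
  have cvw := real_inner_comm v w
  nlinarith [mul_pos ha hb, mul_pos hb hc, mul_pos ha hc, mul_pos (mul_pos ha hb) hc,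
    mul_pos (mul_pos ha ha) (mul_pos hb hc), mul_pos (mul_pos hb hb) (mul_pos ha hc),
    mul_pos (mul_pos hc hc) (mul_pos ha hb)]

lemma close_pair {E : Type*} [NormedAddCommGroup E] [InnerProductSpace ℝ E]
    {u v : E} {r : ℝ} (hr : 0 ≤ r) (hu : ‖u‖ ≤ r) (hv : ‖v‖ ≤ r)
    (h : -(1/2) * (‖u‖*‖v‖) ≤ ⟪u, v⟫) : ‖u - v‖ ≤ Real.sqrt 3 * r := by
  have hexp : ‖u - v‖^2 = ‖u‖^2 - 2 * ⟪u, v⟫ + ‖v‖^2 := by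
    rw [@norm_sub_sq_real]
  have hsq : ‖u - v‖^2 ≤ (Real.sqrt 3 * r)^2 := by
    have h3 : (Real.sqrt 3 * r)^2 = 3 * r^2 := by
      rw [mul_pow, Real.sq_sqrt (by norm_num : (3:ℝ) ≥ 0)]
    rw [hexp, h3]
    nlinarith [norm_nonneg u, norm_nonneg v]
  calc ‖u - v‖ = Real.sqrt (‖u - v‖^2) := (Real.sqrt_sq (norm_nonneg _)).symm
    _ ≤ Real.sqrt ((Real.sqrt 3 * r)^2) := Real.sqrt_le_sqrt hsq
    _ = Real.sqrt 3 * r := Real.sqrt_sq (by positivity)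

/-- If the points of `C ⊆ ℝ^d` are pairwise at distance more than `√3 · r`, then any
point `f` has at most `2` points of `C` within distance `r`. -/
theorem facility_covers_at_most_two
    {d : ℕ} (r : ℝ) (hr : 0 ≤ r) (C : Set (EuclideanSpace ℝ (Fin d)))
    (hC : ∀ c ∈ C, ∀ c' ∈ C, c ≠ c' → Real.sqrt 3 * r < ‖c - c'‖)
    (f : EuclideanSpace ℝ (Fin d)) :
    {c ∈ C | ‖c - f‖ ≤ r}.encard ≤ 2 := by
  set S := {c ∈ C | ‖c - f‖ ≤ r} with hS
  by_contra h
  push_neg at h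
  obtain ⟨a, b, haS, hbS, hab⟩ := Set.one_lt_encard_iff.1 (((by norm_num : (1:ℕ∞) < 2).trans h))
  have hne : (S \ {a, b}).Nonempty := by
    by_contra h'
    rw [Set.not_nonempty_iff_eq_empty, Set.diff_eq_empty] at h'
    have : S.encard ≤ 2 := le_trans (Set.encard_le_encard h') (by
      rw [Set.encard_pair hab])
    exact absurd this (not_le.2 h)
  obtain ⟨c, hcS, hcab⟩ := hne
  simp only [Set.mem_insert_iff, Set.mem_singleton_iff, not_or] at hcab
  obtain ⟨hca, hcb⟩ := hcab
  have hfa : ‖a - f‖ ≤ r := haS.2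
  have hfb : ‖b - f‖ ≤ r := hbS.2
  have hfc : ‖c - f‖ ≤ r := hcS.2
  have contra : ∀ x ∈ S, ∀ y ∈ S, x ≠ y →
      ¬ (-(1/2) * (‖x - f‖*‖y - f‖) ≤ ⟪x - f, y - f⟫) := by
    intro x hx y hy hxy hin
    have := close_pair hr hx.2 hy.2 hin
    rw [sub_sub_sub_cancel_right] at this
    exact absurd this (not_le.2 (hC x hx.1 y hy.1 hxy))
  rcases key_pair (a - f) (b - f) (c - f) with h1 | h1 | h1
  · exact contra a haS b hbS hab h1
  · exact contra a haS c hcS (Ne.symm hca) h1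
  · exact contra b hbS c hcS (Ne.symm hcb) h1
end

section
/- Let r ≥ 0 and let c₁, c₂, c₃ be three points in the Euclidean plane ℝ² lying on a common circle of radius r (i.e., there exists z ∈ ℝ² with ‖cᵢ − z‖ = r for i = 1,2,3). Then at least one of the pairwise distances ‖c₁ − c₂‖, ‖c₁ − c₃‖, ‖c₂ − c₃‖ is at most √3 · r. -/
/-- Among three points on a common circle of radius `r` in the Euclidean plane, some pair
is at distance at most `√3 · r`. -/
theorem three_points_on_circle_close_pair
    (r : ℝ) (hr : 0 ≤ r) (c₁ c₂ c₃ : EuclideanSpace ℝ (Fin 2))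
    (hz : ∃ z : EuclideanSpace ℝ (Fin 2),
      ‖c₁ - z‖ = r ∧ ‖c₂ - z‖ = r ∧ ‖c₃ - z‖ = r) :
    ‖c₁ - c₂‖ ≤ Real.sqrt 3 * r ∨ ‖c₁ - c₃‖ ≤ Real.sqrt 3 * r ∨
      ‖c₂ - c₃‖ ≤ Real.sqrt 3 * r := by
  obtain ⟨z, h1, h2, h3⟩ := hz
  by_contra hcon
  push_neg at hcon
  obtain ⟨g12, g13, g23⟩ := hcon
  set v₁ := c₁ - z with hv1
  set v₂ := c₂ - z with hv2
  set v₃ := c₃ - z with hv3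
  have e12 : c₁ - c₂ = v₁ - v₂ := by simp [hv1, hv2]
  have e13 : c₁ - c₃ = v₁ - v₃ := by simp [hv1, hv3]
  have e23 : c₂ - c₃ = v₂ - v₃ := by simp [hv2, hv3]
  rw [e12] at g12; rw [e13] at g13; rw [e23] at g23
  have hs3 : Real.sqrt 3 * Real.sqrt 3 = 3 := Real.mul_self_sqrt (by norm_num)
  have sq12 : 3 * r ^ 2 < ‖v₁ - v₂‖ ^ 2 := by
    have := mul_self_lt_mul_self (by positivity) g12
    nlinarith [this]
  have sq13 : 3 * r ^ 2 < ‖v₁ - v₃‖ ^ 2 := by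
    have := mul_self_lt_mul_self (by positivity) g13
    nlinarith [this]
  have sq23 : 3 * r ^ 2 < ‖v₂ - v₃‖ ^ 2 := by
    have := mul_self_lt_mul_self (by positivity) g23
    nlinarith [this]
  have n12 : ‖v₁ - v₂‖ ^ 2 = r ^ 2 + r ^ 2 - 2 * inner ℝ v₁ v₂ := by
    rw [@norm_sub_sq_real, h1, h2]; ring
  have n13 : ‖v₁ - v₃‖ ^ 2 = r ^ 2 + r ^ 2 - 2 * inner ℝ v₁ v₃ := by
    rw [@norm_sub_sq_real, h1, h3]; ring
  have n23 : ‖v₂ - v₃‖ ^ 2 = r ^ 2 + r ^ 2 - 2 * inner ℝ v₂ v₃ := by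
    rw [@norm_sub_sq_real, h2, h3]; ring
  have hsum : (0:ℝ) ≤ ‖v₁ + v₂ + v₃‖ ^ 2 := by positivity
  have expand : ‖v₁ + v₂ + v₃‖ ^ 2
      = 3 * r ^ 2 + 2 * inner ℝ v₁ v₂ + 2 * inner ℝ v₁ v₃ + 2 * inner ℝ v₂ v₃ := by
    have h := @norm_add_sq_real (EuclideanSpace ℝ (Fin 2)) _ _ (v₁ + v₂) v₃
    have h' := @norm_add_sq_real (EuclideanSpace ℝ (Fin 2)) _ _ v₁ v₂
    rw [h, h', inner_add_left, h1, h2, h3]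
    ring
  rw [expand] at hsum
  linarith
end

section
/- Let (M, d) be a metric space, let X ⊆ M be a finite set, let x : X → ℝ, and let r ≥ 0. Write Z = {u ∈ X : x(u) > 0}. Then there exist a finite set C ⊆ Z and a family of sets {X_c}_{c ∈ C} such that: (1) the sets X_c are pairwise disjoint and their union equals Z; (2) for every c ∈ C, c ∈ X_c and X_c ⊆ {u ∈ Z : d(u, c) ≤ √3 · r}; (3) for every c ∈ C and every u ∈ X_c, x(c) ≥ x(u); and (4) for all distinct c, c' ∈ C, d(c, c') > √3 · r. -/
open Finset

theorem greedy_aux {M : Type*} [MetricSpace M] [DecidableEq M] (x : M → ℝ)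
    (t : ℝ) (ht : 0 ≤ t) (S : Finset M) :
    ∃ (C : Finset M) (Xc : M → Finset M),
      C ⊆ S ∧
      ((C : Set M).Pairwise fun c c' => Disjoint (Xc c) (Xc c')) ∧
      C.biUnion Xc = S ∧
      (∀ c ∈ C, c ∈ Xc c) ∧
      (∀ c ∈ C, Xc c ⊆ S.filter (fun u => dist u c ≤ t)) ∧
      (∀ c ∈ C, ∀ u ∈ Xc c, x u ≤ x c) ∧
      (∀ c ∈ C, ∀ c' ∈ C, c ≠ c' → t < dist c c') := by
  induction S using Finset.strongInduction with
  | _ S ih =>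
    rcases S.eq_empty_or_nonempty with rfl | hS
    · exact ⟨∅, fun _ => ∅, by simp, by simp, by simp, by simp, by simp, by simp, by simp⟩
    · obtain ⟨c, hcS, hcmax⟩ := S.exists_max_image x hS
      set B := S.filter (fun u => dist u c ≤ t) with hB
      have hcB : c ∈ B := by simp [hB, hcS, ht]
      have hBS : B ⊆ S := filter_subset _ _
      have hss : S \ B ⊂ S := sdiff_ssubset hBS ⟨c, hcB⟩
      obtain ⟨C', Xc', hC'sub, hdisj', hbi', hmem', hball', hmax', hfar'⟩ := ih _ hss
      have hcC' : c ∉ C' := fun h => (mem_sdiff.mp (hC'sub h)).2 hcB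
      have hC'ne : ∀ c' ∈ C', c' ≠ c := fun c' h h' => hcC' (h' ▸ h)
      have hfarc : ∀ c' ∈ C', t < dist c' c := by
        intro c' hc'
        have h := mem_sdiff.mp (hC'sub hc')
        by_contra h'
        exact h.2 (mem_filter.mpr ⟨h.1, le_of_not_gt h'⟩)
      refine ⟨insert c C', fun m => if m = c then B else Xc' m, ?_, ?_, ?_, ?_, ?_, ?_, ?_⟩
      · intro u hu
        rcases mem_insert.mp hu with rfl | hu
        · exact hcS
        · exact (mem_sdiff.mp (hC'sub hu)).1
      · intro c1 hc1 c2 hc2 hne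
        simp only [coe_insert, Set.mem_insert_iff, mem_coe] at hc1 hc2
        rcases hc1 with rfl | hc1 <;> rcases hc2 with rfl | hc2
        · exact absurd rfl hne
        · simp only [if_pos rfl, if_neg (hC'ne _ hc2)]
          exact Finset.disjoint_left.mpr fun a ha hb =>
            (mem_sdiff.mp (filter_subset _ _ (hball' _ hc2 hb))).2 ha
        · simp only [if_pos rfl, if_neg (hC'ne _ hc1)]
          exact Finset.disjoint_left.mpr fun a ha hb =>
            (mem_sdiff.mp (filter_subset _ _ (hball' _ hc1 ha))).2 hb
        · simp only [if_neg (hC'ne _ hc1), if_neg (hC'ne _ hc2)]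
          exact hdisj' hc1 hc2 hne
      · rw [biUnion_insert, if_pos rfl]
        have : C'.biUnion (fun m => if m = c then B else Xc' m) = C'.biUnion Xc' := by
          apply biUnion_congr rfl
          intro m hm; rw [if_neg (hC'ne _ hm)]
        rw [this, hbi']
        exact union_sdiff_of_subset hBS
      · intro c1 hc1
        rcases mem_insert.mp hc1 with rfl | hcn1
        · simpa using hcB
        · simp only [if_neg (hC'ne _ hcn1)]; exact hmem' _ hcn1
      · intro c1 hc1
        rcases mem_insert.mp hc1 with rfl | hcn1
        · simp only [if_pos rfl]; exact subset_rfl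
        · simp only [if_neg (hC'ne _ hcn1)]
          exact (hball' _ hcn1).trans (filter_subset_filter _ sdiff_subset)
      · intro c1 hc1 u hu
        rcases mem_insert.mp hc1 with rfl | hcn1
        · simp only [if_pos rfl] at hu; exact hcmax _ (hBS hu)
        · simp only [if_neg (hC'ne _ hcn1)] at hu; exact hmax' _ hcn1 _ hu
      · intro c1 hc1 c2 hc2 hne
        rcases mem_insert.mp hc1 with rfl | hcn1 <;> rcases mem_insert.mp hc2 with rfl | hcn2
        · exact absurd rfl hne
        · rw [dist_comm]; exact hfarc _ hcn2
        · exact hfarc _ hcn1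
        · exact hfar' _ hcn1 _ hcn2 hne

/-- Correctness of the `x`-based greedy clustering algorithm: the support
`Z = {u ∈ X : x u > 0}` can be partitioned into clusters `X_c`, indexed by
representatives `c ∈ C ⊆ Z`, such that each cluster lies in the ball of radius
`√3 · r` around its representative, each representative has maximum `x`-value in its
cluster, and distinct representatives are at distance more than `√3 · r`. -/
theorem greedy_clustering_exists
    {M : Type*} [MetricSpace M] [DecidableEq M] (X : Finset M) (x : M → ℝ)
    (r : ℝ) (hr : 0 ≤ r) :
    ∃ (C : Finset M) (Xc : M → Finset M),
      -- C is a set of representatives taken from Z = {u ∈ X : x u > 0}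
      C ⊆ X.filter (fun u => 0 < x u) ∧
      -- (1) the clusters are pairwise disjoint and their union is Z
      ((C : Set M).Pairwise fun c c' => Disjoint (Xc c) (Xc c')) ∧
      C.biUnion Xc = X.filter (fun u => 0 < x u) ∧
      -- (2) each representative lies in its own cluster, and each cluster is contained
      --     in the ball of radius √3·r around its representative (within Z)
      (∀ c ∈ C, c ∈ Xc c) ∧
      (∀ c ∈ C, Xc c ⊆ (X.filter (fun u => 0 < x u)).filter
        (fun u => dist u c ≤ Real.sqrt 3 * r)) ∧
      -- (3) each representative has maximum x-value within its cluster
      (∀ c ∈ C, ∀ u ∈ Xc c, x u ≤ x c) ∧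
      -- (4) distinct representatives are far apart
      (∀ c ∈ C, ∀ c' ∈ C, c ≠ c' → Real.sqrt 3 * r < dist c c') := by
  exact greedy_aux x (Real.sqrt 3 * r) (mul_nonneg (Real.sqrt_nonneg 3) hr)
    (X.filter (fun u => 0 < x u))
end

section
/- Let X, F ⊂ ℝ^d be finite sets, r ≥ 0, k ∈ ℕ, and p ∈ ℝ. Let C ⊆ X and let {X_c}_{c ∈ C} be pairwise disjoint subsets of X with X_c ⊆ {u ∈ X : ‖u − c‖₂ ≤ √3 · r} for every c ∈ C. Suppose S ⊆ F with |S| ≤ k, and C' ⊆ C is such that every c ∈ C' satisfies min_{s ∈ S} ‖c − s‖₂ ≤ r and ∑_{c ∈ C'} |X_c| ≥ p. Then |{u ∈ X : min_{s ∈ S} ‖u − s‖₂ ≤ (1 + √3) · r}| ≥ p; that is, S is a set of at most k facilities covering at least p clients within radius (1+√3)·r. -/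
open Finset
open scoped Classical

/-- The rounding lemma: if the clusters `X_c` (each within distance `√3·r` of its
representative `c ∈ C`) are pairwise disjoint, and a set `S ⊆ F` of at most `k`
facilities covers, within radius `r`, a set `C' ⊆ C` of representatives whose clusters
have total size at least `p`, then `S` covers at least `p` clients of `X` within radius
`(1 + √3)·r`. -/
theorem rounding_lemma {d : ℕ}
    (X F : Finset (EuclideanSpace ℝ (Fin d))) (r : ℝ) (hr : 0 ≤ r) (k : ℕ) (p : ℝ)
    (C : Finset (EuclideanSpace ℝ (Fin d))) (hCX : C ⊆ X)
    (Xc : EuclideanSpace ℝ (Fin d) → Finset (EuclideanSpace ℝ (Fin d)))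
    (hdisj : (C : Set (EuclideanSpace ℝ (Fin d))).Pairwise
      fun c c' => Disjoint (Xc c) (Xc c'))
    (hXc : ∀ c ∈ C, Xc c ⊆ X.filter (fun u => ‖u - c‖ ≤ Real.sqrt 3 * r))
    (S : Finset (EuclideanSpace ℝ (Fin d))) (hSF : S ⊆ F) (hSk : S.card ≤ k)
    (C' : Finset (EuclideanSpace ℝ (Fin d))) (hC'C : C' ⊆ C)
    (hC'cov : ∀ c ∈ C', ∃ s ∈ S, ‖c - s‖ ≤ r)
    (hC'w : p ≤ (∑ c ∈ C', ((Xc c).card : ℝ))) :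
    p ≤ ((X.filter (fun u => ∃ s ∈ S, ‖u - s‖ ≤ (1 + Real.sqrt 3) * r)).card : ℝ) := by
  have hsub : C'.biUnion Xc ⊆ X.filter (fun u => ∃ s ∈ S, ‖u - s‖ ≤ (1 + Real.sqrt 3) * r) := by
    intro u hu
    obtain ⟨c, hcC', hucc⟩ := Finset.mem_biUnion.mp hu
    have hXmem := hXc c (hC'C hcC') hucc
    rw [Finset.mem_filter] at hXmem
    obtain ⟨huX, hdist⟩ := hXmem
    obtain ⟨s, hsS, hcs⟩ := hC'cov c hcC'
    refine Finset.mem_filter.mpr ⟨huX, s, hsS, ?_⟩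
    calc ‖u - s‖ ≤ ‖u - c‖ + ‖c - s‖ := by
          simpa using norm_sub_le_norm_sub_add_norm_sub u c s
      _ ≤ Real.sqrt 3 * r + r := add_le_add hdist hcs
      _ = (1 + Real.sqrt 3) * r := by ring
  have hcard : ∑ c ∈ C', (Xc c).card = (C'.biUnion Xc).card := by
    rw [Finset.card_biUnion]
    intro x hx y hy hxy
    exact hdisj (hC'C hx) (hC'C hy) hxy
  calc p ≤ ∑ c ∈ C', ((Xc c).card : ℝ) := hC'w
    _ = ((C'.biUnion Xc).card : ℝ) := by rw [← Nat.cast_sum, hcard]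
    _ ≤ _ := by exact_mod_cast Finset.card_le_card hsub
end

section
/- Let X, F ⊂ ℝ^d be finite sets, r ≥ 0, k ∈ ℕ, p ∈ ℕ. Let C ⊆ X and let w : C → ℕ. Suppose that for every S ⊆ F with |S| ≤ k we have ∑_{c ∈ C, min_{s∈S} ‖c−s‖₂ ≤ r} w(c) < p. Then every point (x', y') of P_I(r) = conv(P(r) ∩ ({0,1}^X × {0,1}^F)) satisfies ∑_{c ∈ C} w(c) · x'(c) ≤ p − 1, where P(r) = {(x, y) ∈ [0,1]^X × [0,1]^F : ∑_{s ∈ F} y(s) ≤ k; ∑_{s ∈ F, ‖u−s‖₂ ≤ r} y(s) ≥ x(u) for all u ∈ X; ∑_{u ∈ X} x(u) ≥ p}. -/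
open Finset
open scoped Classical

/-- The canonical LP relaxation `P(r)` of Robust Euclidean `k`-Supplier. -/
def kSupPoly {d : ℕ} (X F : Finset (EuclideanSpace ℝ (Fin d))) (k : ℕ) (p : ℝ) (r : ℝ) :
    Set ((EuclideanSpace ℝ (Fin d) → ℝ) × (EuclideanSpace ℝ (Fin d) → ℝ)) :=
  {xy | (∀ u ∈ X, xy.1 u ∈ Set.Icc (0 : ℝ) 1) ∧
        (∀ s ∈ F, xy.2 s ∈ Set.Icc (0 : ℝ) 1) ∧
        (∑ s ∈ F, xy.2 s ≤ (k : ℝ)) ∧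
        (∀ u ∈ X, xy.1 u ≤ ∑ s ∈ F.filter (fun s => ‖u - s‖ ≤ r), xy.2 s) ∧
        (p ≤ ∑ u ∈ X, xy.1 u)}

/-- The integer hull `P_I(r)`: the convex hull of the `0/1` points of `P(r)`. -/
noncomputable def kSupPolyI {d : ℕ} (X F : Finset (EuclideanSpace ℝ (Fin d)))
    (k : ℕ) (p : ℝ) (r : ℝ) :
    Set ((EuclideanSpace ℝ (Fin d) → ℝ) × (EuclideanSpace ℝ (Fin d) → ℝ)) :=
  convexHull ℝ (kSupPoly X F k p r ∩
    {xy | (∀ u ∈ X, xy.1 u = 0 ∨ xy.1 u = 1) ∧ (∀ s ∈ F, xy.2 s = 0 ∨ xy.2 s = 1)})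

/-- The separation lemma: if no set of at most `k` facilities covers, within radius `r`,
representatives of `C` of total weight at least `p`, then
`∑_{c ∈ C} w(c) · x'(c) ≤ p − 1` is a valid inequality for the integer hull `P_I(r)`. -/
theorem separation_lemma {d : ℕ}
    (X F : Finset (EuclideanSpace ℝ (Fin d))) (r : ℝ) (hr : 0 ≤ r) (k : ℕ) (p : ℕ)
    (C : Finset (EuclideanSpace ℝ (Fin d))) (hCX : C ⊆ X)
    (w : EuclideanSpace ℝ (Fin d) → ℕ)
    (hmaxcov : ∀ S ⊆ F, S.card ≤ k →
      ∑ c ∈ C.filter (fun c => ∃ s ∈ S, ‖c - s‖ ≤ r), w c < p) :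
    ∀ xy ∈ kSupPolyI X F k (p : ℝ) r,
      ∑ c ∈ C, (w c : ℝ) * xy.1 c ≤ (p : ℝ) - 1 := by
  intro xy hxy
  have hlin : IsLinearMap ℝ
      (fun xy : (EuclideanSpace ℝ (Fin d) → ℝ) × (EuclideanSpace ℝ (Fin d) → ℝ) =>
        ∑ c ∈ C, (w c : ℝ) * xy.1 c) := by
    constructor
    · intro a b
      simp [mul_add, Finset.sum_add_distrib]
    · intro t a
      simp [Finset.mul_sum, mul_comm, mul_assoc, mul_left_comm]
  have hconv : Convex ℝ {xy : (EuclideanSpace ℝ (Fin d) → ℝ) × (EuclideanSpace ℝ (Fin d) → ℝ) |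
      ∑ c ∈ C, (w c : ℝ) * xy.1 c ≤ (p : ℝ) - 1} := convex_halfSpace_le hlin _
  refine convexHull_min ?_ hconv hxy
  rintro z ⟨hz, hzx, hzy⟩
  obtain ⟨hx01, hy01, hycard, hcov, hp⟩ := hz
  set S : Finset (EuclideanSpace ℝ (Fin d)) := F.filter (fun s => z.2 s = 1) with hS
  have hSF : S ⊆ F := Finset.filter_subset _ _
  have hsum : ∑ s ∈ F, z.2 s = (S.card : ℝ) := by
    rw [hS, Finset.card_filter]
    push_cast
    apply Finset.sum_congr rfl
    intro s hs
    rcases hzy s hs with h | h <;> simp [h]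
  have hSk : S.card ≤ k := by
    have := hycard
    rw [hsum] at this
    exact_mod_cast this
  -- covered points
  have hsub : C.filter (fun c => z.1 c = 1) ⊆ C.filter (fun c => ∃ s ∈ S, ‖c - s‖ ≤ r) := by
    intro c hc
    rw [Finset.mem_filter] at hc ⊢
    obtain ⟨hcC, hc1⟩ := hc
    refine ⟨hcC, ?_⟩
    have hle := hcov c (hCX hcC)
    rw [hc1] at hle
    by_contra hnone
    push_neg at hnone
    have : ∑ s ∈ F.filter (fun s => ‖c - s‖ ≤ r), z.2 s = 0 := by
      apply Finset.sum_eq_zero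
      intro s hs
      rw [Finset.mem_filter] at hs
      rcases hzy s hs.1 with h | h
      · exact h
      · exfalso
        have : s ∈ S := by rw [hS, Finset.mem_filter]; exact ⟨hs.1, h⟩
        exact absurd hs.2 (not_le.mpr (hnone s this))
    linarith
  show ∑ c ∈ C, (w c : ℝ) * z.1 c ≤ (p : ℝ) - 1
  have hkey : ∑ c ∈ C, (w c : ℝ) * z.1 c
      ≤ ((∑ c ∈ C.filter (fun c => ∃ s ∈ S, ‖c - s‖ ≤ r), w c : ℕ) : ℝ) := by
    have h1 : ∑ c ∈ C, (w c : ℝ) * z.1 c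
        = ∑ c ∈ C.filter (fun c => z.1 c = 1), (w c : ℝ) := by
      rw [Finset.sum_filter]
      apply Finset.sum_congr rfl
      intro c hc
      rcases hzx c (hCX hc) with h | h <;> simp [h]
    rw [h1]
    push_cast
    exact Finset.sum_le_sum_of_subset_of_nonneg hsub (by intro i _ _; positivity)
  have hlt := hmaxcov S hSF hSk
  have : ((∑ c ∈ C.filter (fun c => ∃ s ∈ S, ‖c - s‖ ≤ r), w c : ℕ) : ℝ) ≤ (p : ℝ) - 1 := by
    have h1 : (∑ c ∈ C.filter (fun c => ∃ s ∈ S, ‖c - s‖ ≤ r), w c) + 1 ≤ p := hlt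
    have h2 : ((∑ c ∈ C.filter (fun c => ∃ s ∈ S, ‖c - s‖ ≤ r), w c : ℕ) : ℝ) + 1 ≤ (p : ℝ) := by
      exact_mod_cast h1
    linarith
  linarith
end

section
/- Let r ≥ 0, let T ⊂ ℝ^d be a finite set, and let C ⊂ ℝ^d be a set of points such that ‖c − c'‖₂ > √3 · r for all distinct c, c' ∈ C and such that every c ∈ C satisfies min_{t ∈ T} ‖c − t‖₂ ≤ r. Then |C| ≤ 2 · |T|. -/
open Finset

open scoped RealInnerProductSpace in
private lemma aux_close_of_inner {E : Type*} [NormedAddCommGroup E] [InnerProductSpace ℝ E]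
    (r : ℝ) (hr : 0 ≤ r) (u v : E) (hu : ‖u‖ ≤ r) (hv : ‖v‖ ≤ r)
    (h : -(‖u‖ * ‖v‖) / 2 ≤ ⟪u, v⟫) : ‖u - v‖ ≤ Real.sqrt 3 * r := by
  have hsq := norm_sub_sq_real u v
  nlinarith [Real.sq_sqrt (show (0:ℝ) ≤ 3 by norm_num), Real.sqrt_nonneg 3,
    norm_nonneg (u - v), norm_nonneg u, norm_nonneg v, mul_nonneg hr hr,
    mul_nonneg (Real.sqrt_nonneg 3) hr, sq_nonneg (‖u - v‖ - Real.sqrt 3 * r)]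

open scoped RealInnerProductSpace in
private lemma aux_three_close {E : Type*} [NormedAddCommGroup E] [InnerProductSpace ℝ E]
    (r : ℝ) (hr : 0 ≤ r) (t x y z : E)
    (hx : ‖x - t‖ ≤ r) (hy : ‖y - t‖ ≤ r) (hz : ‖z - t‖ ≤ r) :
    ‖x - y‖ ≤ Real.sqrt 3 * r ∨ ‖x - z‖ ≤ Real.sqrt 3 * r ∨ ‖y - z‖ ≤ Real.sqrt 3 * r := by
  have h1 : (1 : ℝ) ≤ Real.sqrt 3 := by
    rw [show (1:ℝ) = Real.sqrt 1 by simp]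
    exact Real.sqrt_le_sqrt (by norm_num)
  have hr3 : r ≤ Real.sqrt 3 * r := le_mul_of_one_le_left hr h1
  set u := x - t with hu
  set v := y - t with hv
  set w := z - t with hw
  have exy : x - y = u - v := by rw [hu, hv]; abel
  have exz : x - z = u - w := by rw [hu, hw]; abel
  have eyz : y - z = v - w := by rw [hv, hw]; abel
  rcases eq_or_ne u 0 with h0 | hu0
  · left; rw [exy, h0, zero_sub, norm_neg]; exact hy.trans hr3
  rcases eq_or_ne v 0 with h0 | hv0
  · left; rw [exy, h0, sub_zero]; exact hx.trans hr3
  rcases eq_or_ne w 0 with h0 | hw0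
  · right; left; rw [exz, h0, sub_zero]; exact hx.trans hr3
  set p := ‖u‖⁻¹ • u with hp
  set q := ‖v‖⁻¹ • v with hq
  set s := ‖w‖⁻¹ • w with hs
  have hpn : ‖p‖ = 1 := norm_smul_inv_norm hu0
  have hqn : ‖q‖ = 1 := norm_smul_inv_norm hv0
  have hsn : ‖s‖ = 1 := norm_smul_inv_norm hw0
  have hexp : ‖p + q + s‖ ^ 2 =
      ‖p‖ ^ 2 + ‖q‖ ^ 2 + ‖s‖ ^ 2 + 2 * ⟪p, q⟫ + 2 * ⟪p, s⟫ + 2 * ⟪q, s⟫ := by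
    rw [← real_inner_self_eq_norm_sq, ← real_inner_self_eq_norm_sq,
      ← real_inner_self_eq_norm_sq, ← real_inner_self_eq_norm_sq]
    simp only [inner_add_left, inner_add_right]
    rw [real_inner_comm q p, real_inner_comm s p, real_inner_comm s q]
    ring
  have h0 : (0 : ℝ) ≤ ‖p + q + s‖ ^ 2 := sq_nonneg _
  rw [hexp, hpn, hqn, hsn] at h0
  have hcase : -(1:ℝ)/2 ≤ ⟪p, q⟫ ∨ -(1:ℝ)/2 ≤ ⟪p, s⟫ ∨ -(1:ℝ)/2 ≤ ⟪q, s⟫ := by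
    by_contra hc
    push_neg at hc
    linarith [hc.1, hc.2.1, hc.2.2]
  have hau : 0 < ‖u‖ := norm_pos_iff.2 hu0
  have hav : 0 < ‖v‖ := norm_pos_iff.2 hv0
  have haw : 0 < ‖w‖ := norm_pos_iff.2 hw0
  have key : ∀ (a b : E), 0 < ‖a‖ → 0 < ‖b‖ → ‖a‖ ≤ r → ‖b‖ ≤ r →
      -(1:ℝ)/2 ≤ ⟪‖a‖⁻¹ • a, ‖b‖⁻¹ • b⟫ → ‖a - b‖ ≤ Real.sqrt 3 * r := by
    intro a b ha hb har hbr hin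
    apply aux_close_of_inner r hr a b har hbr
    rw [real_inner_smul_left, real_inner_smul_right] at hin
    have := mul_le_mul_of_nonneg_left hin (le_of_lt (mul_pos ha hb))
    rw [show ‖a‖ * ‖b‖ * (‖a‖⁻¹ * (‖b‖⁻¹ * ⟪a, b⟫)) = (‖a‖ * ‖a‖⁻¹) * (‖b‖ * ‖b‖⁻¹) * ⟪a, b⟫
      by ring, mul_inv_cancel₀ ha.ne', mul_inv_cancel₀ hb.ne', one_mul, one_mul] at this
    linarith
  rcases hcase with hc | hc | hc
  · left; rw [exy]; exact key u v hau hav hx hy hc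
  · right; left; rw [exz]; exact key u w hau haw hx hz hc
  · right; right; rw [eyz]; exact key v w hav haw hy hz hc

private lemma aux_encard_le_two {α : Type*} (S : Set α)
    (h : ∀ x ∈ S, ∀ y ∈ S, ∀ z ∈ S, x = y ∨ x = z ∨ y = z) : S.encard ≤ 2 := by
  rcases S.eq_empty_or_nonempty with rfl | ⟨a, ha⟩
  · simp
  by_cases hS : S ⊆ {a}
  · calc S.encard ≤ ({a} : Set α).encard := Set.encard_mono hS
    _ = 1 := Set.encard_singleton a
    _ ≤ 2 := by norm_num
  · obtain ⟨b, hb, hba⟩ : ∃ b ∈ S, b ≠ a := by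
      by_contra hc; push_neg at hc; exact hS fun c hc' ↦ hc c hc'
    have hsub : S ⊆ {a, b} := by
      intro c hc
      rcases h c hc a ha b hb with h' | h' | h'
      · exact Or.inl h'
      · exact Or.inr h'
      · exact absurd h'.symm hba
    calc S.encard ≤ ({a, b} : Set α).encard := Set.encard_mono hsub
      _ = 2 := Set.encard_pair hba.symm.symm.symm ▸ Set.encard_pair (Ne.symm hba)

private lemma aux_cover_count {α β : Type*} (P : α → β → Prop) (T : Finset β) :
    ∀ (C : Set α), (∀ c ∈ C, ∃ t ∈ T, P c t) →
    (∀ t, ({c ∈ C | P c t} : Set α).encard ≤ 2) → C.encard ≤ 2 * T.card := by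
  classical
  induction T using Finset.induction with
  | empty =>
    intro C hcov _
    have : C = ∅ := by
      ext c; simp only [Set.mem_empty_iff_false, iff_false]
      intro hc; obtain ⟨t, ht, _⟩ := hcov c hc; exact absurd ht (Finset.notMem_empty t)
    simp [this]
  | insert t T' hnt ih =>
    intro C hcov hfib
    set C' : Set α := {c ∈ C | ¬ P c t} with hC'
    have hcov' : ∀ c ∈ C', ∃ s ∈ T', P c s := by
      intro c hc
      obtain ⟨s, hs, hps⟩ := hcov c hc.1
      rcases Finset.mem_insert.1 hs with rfl | hs'
      · exact absurd hps hc.2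
      · exact ⟨s, hs', hps⟩
    have hfib' : ∀ s, ({c ∈ C' | P c s} : Set α).encard ≤ 2 := by
      intro s
      refine le_trans (Set.encard_mono ?_) (hfib s)
      intro c hc; exact ⟨hc.1.1, hc.2⟩
    have hsub : C ⊆ {c ∈ C | P c t} ∪ C' := by
      intro c hc
      by_cases hp : P c t
      · exact Or.inl ⟨hc, hp⟩
      · exact Or.inr ⟨hc, hp⟩
    calc C.encard ≤ ({c ∈ C | P c t} ∪ C').encard := Set.encard_mono hsub
      _ ≤ ({c ∈ C | P c t} : Set α).encard + C'.encard := Set.encard_union_le _ _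
      _ ≤ 2 + 2 * T'.card := add_le_add (hfib t) (ih C' hcov' hfib')
      _ = 2 * (insert t T').card := by
        rw [Finset.card_insert_of_notMem hnt]
        push_cast
        ring

/-- If the points of `C` are pairwise at distance more than `√3 · r` and every point of
`C` is within distance `r` of some point of the finite set `T`, then `|C| ≤ 2 · |T|`. -/
theorem separated_points_covered_card {d : ℕ}
    (r : ℝ) (hr : 0 ≤ r) (T : Finset (EuclideanSpace ℝ (Fin d)))
    (C : Set (EuclideanSpace ℝ (Fin d)))
    (hsep : ∀ c ∈ C, ∀ c' ∈ C, c ≠ c' → Real.sqrt 3 * r < ‖c - c'‖)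
    (hcov : ∀ c ∈ C, ∃ t ∈ T, ‖c - t‖ ≤ r) :
    C.encard ≤ 2 * T.card := by
  apply aux_cover_count (fun c t ↦ ‖c - t‖ ≤ r) T C hcov
  intro t
  apply aux_encard_le_two
  intro x hx y hy z hz
  by_contra hc
  push_neg at hc
  obtain ⟨hxy, hxz, hyz⟩ := hc
  rcases aux_three_close r hr t x y z hx.2 hy.2 hz.2 with h | h | h
  · exact absurd h (not_le.2 (hsep x hx.1 y hy.1 hxy))
  · exact absurd h (not_le.2 (hsep x hx.1 z hz.1 hxz))
  · exact absurd h (not_le.2 (hsep y hy.1 z hz.1 hyz))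
end

section
/- Let X, F ⊂ ℝ^d be finite sets, r ≥ 0, k ∈ ℕ, p ∈ ℕ with p ≥ 1. Let (x, y) ∈ P_I(r) = conv(P(r) ∩ ({0,1}^X × {0,1}^F)), where P(r) = {(x, y) ∈ [0,1]^X × [0,1]^F : ∑_{s ∈ F} y(s) ≤ k; ∑_{s ∈ F, ‖u−s‖₂ ≤ r} y(s) ≥ x(u) for all u ∈ X; ∑_{u ∈ X} x(u) ≥ p}. Let C ⊆ X and pairwise disjoint sets {X_c}_{c ∈ C} satisfy: the union of the X_c equals {u ∈ X : x(u) > 0}, and x(c) ≥ x(u) for every c ∈ C and u ∈ X_c. Then there exists S ⊆ F with |S| ≤ k such that ∑_{c ∈ C, min_{s ∈ S} ‖c − s‖₂ ≤ r} |X_c| ≥ p. -/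
open Finset
open scoped Classical

/-- For any point `(x, y)` of the integer hull `P_I(r)` and any clustering of the support
of `x` into representatives `C` and pairwise disjoint clusters `X_c` (each representative
having maximum `x`-value in its cluster), some set `S` of at most `k` facilities covers,
within radius `r`, representatives of total cluster size at least `p`. -/
theorem max_k_edge_cover_value_at_least_p {d : ℕ}
    (X F : Finset (EuclideanSpace ℝ (Fin d))) (r : ℝ) (hr : 0 ≤ r) (k : ℕ)
    (p : ℕ) (hp : 1 ≤ p)
    (xy : (EuclideanSpace ℝ (Fin d) → ℝ) × (EuclideanSpace ℝ (Fin d) → ℝ))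
    (hxy : xy ∈ kSupPolyI X F k (p : ℝ) r)
    (C : Finset (EuclideanSpace ℝ (Fin d))) (hCX : C ⊆ X)
    (Xc : EuclideanSpace ℝ (Fin d) → Finset (EuclideanSpace ℝ (Fin d)))
    (hXcX : ∀ c ∈ C, Xc c ⊆ X)
    (hdisj : (C : Set (EuclideanSpace ℝ (Fin d))).Pairwise
      fun c c' => Disjoint (Xc c) (Xc c'))
    (hunion : C.biUnion Xc = X.filter (fun u => 0 < xy.1 u))
    (hmax : ∀ c ∈ C, ∀ u ∈ Xc c, xy.1 u ≤ xy.1 c) :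
    ∃ S ⊆ F, S.card ≤ k ∧
      p ≤ ∑ c ∈ C.filter (fun c => ∃ s ∈ S, ‖c - s‖ ≤ r), (Xc c).card := by
  classical
  rw [kSupPolyI, _root_.convexHull_eq] at hxy
  obtain ⟨ι, t, w, z, hw0, hw1, hzs, hcm⟩ := hxy
  rw [Finset.centerMass_eq_of_sum_1 _ _ hw1] at hcm
  have hmem : ∀ i ∈ t, z i ∈ kSupPoly X F k (p : ℝ) r := fun i hi => (hzs i hi).1
  have hint : ∀ i ∈ t, (∀ u ∈ X, (z i).1 u = 0 ∨ (z i).1 u = 1) ∧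
      (∀ s ∈ F, (z i).2 s = 0 ∨ (z i).2 s = 1) := fun i hi => (hzs i hi).2
  have hx1 : ∀ u, xy.1 u = ∑ i ∈ t, w i * (z i).1 u := by
    intro u
    rw [← hcm, Prod.fst_sum, Finset.sum_apply]
    simp [smul_eq_mul]
  -- S i covers c whenever (z i).1 c = 1
  have hcovered : ∀ i ∈ t, ∀ c ∈ C, (z i).1 c = 1 →
      ∃ s ∈ F.filter (fun s => (z i).2 s = 1), ‖c - s‖ ≤ r := by
    intro i hi c hc h1
    obtain ⟨h01x, h01y, hk, hcov, hpge⟩ := hmem i hi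
    have h := hcov c (hCX hc)
    rw [h1] at h
    by_contra hne
    push_neg at hne
    have hz : ∑ s ∈ F.filter (fun s => ‖c - s‖ ≤ r), (z i).2 s = 0 := by
      apply Finset.sum_eq_zero
      intro s hs
      obtain ⟨hsF, hsr⟩ := Finset.mem_filter.1 hs
      rcases (hint i hi).2 s hsF with h0 | hone
      · exact h0
      · exact absurd hsr (not_le.2 (hne s (Finset.mem_filter.2 ⟨hsF, hone⟩)))
    rw [hz] at h
    linarith
  have hScard : ∀ i ∈ t, (F.filter fun s => (z i).2 s = 1).card ≤ k := by
    intro i hi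
    obtain ⟨h01x, h01y, hk, hcov, hpge⟩ := hmem i hi
    have hreal : ((F.filter fun s => (z i).2 s = 1).card : ℝ) ≤ (k : ℝ) := by
      calc ((F.filter fun s => (z i).2 s = 1).card : ℝ)
          = ∑ s ∈ F.filter (fun s => (z i).2 s = 1), (z i).2 s := by
            rw [Finset.sum_congr rfl (fun s hs => (Finset.mem_filter.1 hs).2)]
            simp
        _ ≤ ∑ s ∈ F, (z i).2 s :=
            Finset.sum_le_sum_of_subset_of_nonneg (Finset.filter_subset _ _)
              (fun s hs _ => ((h01y s hs).1))
        _ ≤ (k : ℝ) := hk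
    exact_mod_cast hreal
  have hxnn : ∀ u ∈ X, 0 ≤ xy.1 u := by
    intro u hu
    rw [hx1]
    exact Finset.sum_nonneg fun i hi =>
      mul_nonneg (hw0 i hi) ((hmem i hi).1 u hu).1
  -- Step A
  have hA : (p : ℝ) ≤ ∑ u ∈ X, xy.1 u := by
    have hswap : ∑ u ∈ X, xy.1 u = ∑ i ∈ t, w i * ∑ u ∈ X, (z i).1 u := by
      simp_rw [hx1]
      rw [Finset.sum_comm]
      exact Finset.sum_congr rfl fun i _ => (Finset.mul_sum _ _ _).symm
    rw [hswap]
    calc (p : ℝ) = ∑ i ∈ t, w i * (p : ℝ) := by rw [← Finset.sum_mul, hw1, one_mul]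
      _ ≤ _ := Finset.sum_le_sum fun i hi =>
          mul_le_mul_of_nonneg_left (hmem i hi).2.2.2.2 (hw0 i hi)
  -- Step B
  have hB : ∑ u ∈ X, xy.1 u ≤ ∑ c ∈ C, ((Xc c).card : ℝ) * xy.1 c := by
    have h1 : ∑ u ∈ X.filter (fun u => 0 < xy.1 u), xy.1 u = ∑ u ∈ X, xy.1 u := by
      apply Finset.sum_filter_of_ne
      intro u hu h
      exact lt_of_le_of_ne (hxnn u hu) (Ne.symm h)
    rw [← h1, ← hunion, Finset.sum_biUnion hdisj]
    apply Finset.sum_le_sum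
    intro c hc
    have hcard := Finset.sum_le_card_nsmul (Xc c) xy.1 (xy.1 c) (fun u hu => hmax c hc u hu)
    simpa [nsmul_eq_mul] using hcard
  -- Step C
  have hC2 : ∑ c ∈ C, ((Xc c).card : ℝ) * xy.1 c
      = ∑ i ∈ t, w i * ∑ c ∈ C, ((Xc c).card : ℝ) * (z i).1 c := by
    simp_rw [hx1, Finset.mul_sum]
    rw [Finset.sum_comm]
    refine Finset.sum_congr rfl fun i _ => ?_
    refine Finset.sum_congr rfl fun c _ => by ring
  -- Step D
  have hD : ∀ i ∈ t, ∑ c ∈ C, ((Xc c).card : ℝ) * (z i).1 c ≤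
      ((∑ c ∈ C.filter (fun c => ∃ s ∈ F.filter (fun s => (z i).2 s = 1), ‖c - s‖ ≤ r),
        (Xc c).card : ℕ) : ℝ) := by
    intro i hi
    push_cast
    have heq : ∑ c ∈ C, ((Xc c).card : ℝ) * (z i).1 c
        = ∑ c ∈ C.filter (fun c => (z i).1 c = 1), ((Xc c).card : ℝ) := by
      rw [Finset.sum_filter]
      apply Finset.sum_congr rfl
      intro c hc
      rcases (hint i hi).1 c (hCX hc) with h0 | h1
      · simp [h0]
      · simp [h1]
    rw [heq]
    apply Finset.sum_le_sum_of_subset_of_nonneg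
    · intro c hc
      obtain ⟨hcC, h1⟩ := Finset.mem_filter.1 hc
      exact Finset.mem_filter.2 ⟨hcC, hcovered i hi c hcC h1⟩
    · intro c _ _
      positivity
  have hkey : (p : ℝ) ≤ ∑ i ∈ t, w i *
      ((∑ c ∈ C.filter (fun c => ∃ s ∈ F.filter (fun s => (z i).2 s = 1), ‖c - s‖ ≤ r),
        (Xc c).card : ℕ) : ℝ) := by
    refine le_trans (le_trans hA hB) ?_
    rw [hC2]
    exact Finset.sum_le_sum fun i hi =>
      mul_le_mul_of_nonneg_left (hD i hi) (hw0 i hi)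
  -- Step E
  have hE : ∃ i ∈ t, p ≤ ∑ c ∈ C.filter
      (fun c => ∃ s ∈ F.filter (fun s => (z i).2 s = 1), ‖c - s‖ ≤ r), (Xc c).card := by
    by_contra h
    push_neg at h
    have hlt : ∑ i ∈ t, w i *
        ((∑ c ∈ C.filter (fun c => ∃ s ∈ F.filter (fun s => (z i).2 s = 1), ‖c - s‖ ≤ r),
          (Xc c).card : ℕ) : ℝ) ≤ ∑ i ∈ t, w i * ((p : ℝ) - 1) := by
      apply Finset.sum_le_sum
      intro i hi
      apply mul_le_mul_of_nonneg_left _ (hw0 i hi)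
      have hlt' := h i hi
      have : (∑ c ∈ C.filter (fun c => ∃ s ∈ F.filter (fun s => (z i).2 s = 1), ‖c - s‖ ≤ r),
          (Xc c).card) + 1 ≤ p := hlt'
      have hcast : ((∑ c ∈ C.filter (fun c => ∃ s ∈ F.filter (fun s => (z i).2 s = 1), ‖c - s‖ ≤ r),
          (Xc c).card : ℕ) : ℝ) + 1 ≤ (p : ℝ) := by exact_mod_cast this
      linarith
    rw [← Finset.sum_mul, hw1, one_mul] at hlt
    linarith [le_trans hkey hlt]
  obtain ⟨i, hi, hVi⟩ := hE
  exact ⟨F.filter (fun s => (z i).2 s = 1), Finset.filter_subset _ _, hScard i hi, hVi⟩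
end
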